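/- In the set-cover instance game with the deterministic greedy algorithm, in any pure Nash equilibrium the strategies of the agents are pairwise disjoint and each has cardinality at most one; consequently the number of agents with nonempty strategies is at most min{m, n}. -/

import Mathlib

open Finset

section SCIG

variable {α : Type*} [DecidableEq α] {m : ℕ}

/-- Inner loop of the greedy algorithm: scan the remaining order, keeping the
subset covering the most as-yet-uncovered elements (ties broken by order). -/
def bestIdx (S : Fin m → Finset α) (Ucov : Finset α) : List (Fin m) → Fin m → Fin m
  | [], b => b
  | i :: rest, b =>
      bestIdx S Ucov rest (if (S b ∩ Ucov).card < (S i ∩ Ucov).card then i else b)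

/-- Greedy set-cover: repeatedly select the subset (scanned in `order`) covering
the most uncovered elements, until nothing new can be covered.  Returns the
selected agents, in order of selection. -/
def greedyList (S : Fin m → Finset α) (order : List (Fin m)) (Ucov : Finset α) :
    List (Fin m) :=
  match order with
  | [] => []
  | b :: rest =>
    let best := bestIdx S Ucov rest b
    if h : (S best ∩ Ucov).Nonempty then
      best :: greedyList S (b :: rest) (Ucov \ S best)
    else []
termination_by Ucov.card
decreasing_by
  apply Finset.card_lt_card
  refine ⟨Finset.sdiff_subset, fun hsub => ?_⟩
  obtain ⟨x, hx⟩ := h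
  have hx1 := (Finset.mem_inter.mp hx).1
  have hx2 := (Finset.mem_inter.mp hx).2
  have := hsub hx2
  exact (Finset.mem_sdiff.mp this).2 hx1

/-- The set-cover instance induced by a joint strategy: its universe. -/
def unionSet (S : Fin m → Finset α) : Finset α := Finset.univ.biUnion S

/-- The cover computed by the deterministic greedy algorithm (fixed order 1..m). -/
def coverD (S : Fin m → Finset α) : Finset (Fin m) :=
  (greedyList S (List.finRange m) (unionSet S)).toFinset

/-- Utility of agent `i` in the deterministic game. -/
noncomputable def utilD (beta alpha : ℝ) (S : Fin m → Finset α) (i : Fin m) : ℝ :=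
  (if i ∈ coverD S then beta else 0) - alpha * (S i).card

/-- Pure Nash equilibrium of the deterministic game. -/
def IsNashD (beta alpha : ℝ) (S : Fin m → Finset α) : Prop :=
  ∀ (i : Fin m) (T : Finset α),
    utilD beta alpha (Function.update S i T) i ≤ utilD beta alpha S i

/-- Probability (over a uniformly random permutation of the agents) that agent
`i`'s subset is selected by the non-deterministic greedy algorithm. -/
noncomputable def probSel (S : Fin m → Finset α) (i : Fin m) : ℝ :=
  (Finset.univ.filter (fun π : Equiv.Perm (Fin m) =>
      i ∈ greedyList S ((List.finRange m).map π) (unionSet S))).card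
    / (Nat.factorial m)

/-- Expected utility of agent `i` in the non-deterministic game. -/
noncomputable def utilN (beta alpha : ℝ) (S : Fin m → Finset α) (i : Fin m) : ℝ :=
  beta * probSel S i - alpha * (S i).card

/-- Pure Nash equilibrium of the non-deterministic game. -/
def IsNashN (beta alpha : ℝ) (S : Fin m → Finset α) : Prop :=
  ∀ (i : Fin m) (T : Finset α),
    utilN beta alpha (Function.update S i T) i ≤ utilN beta alpha S i

end SCIG

/-! Dropping out (playing `∅`) shows that every agent with a nonempty set is picked by the greedy
run. A picked agent stays picked when it shrinks its set to its marginal, the elements it newly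
covers when picked; at equilibrium its set is therefore its marginal, and marginals are disjoint.
An agent owning `x` still gets picked when playing `{x}`, because by disjointness nobody else
covers `x`, so its set has at most one element. -/

open Function

section ScanBest

variable {ι : Type*} (f f' : ι → ℕ)

/-- `bestIdx` with the coverage counts abstracted to a value function `f`: the first element of
`b :: l` at which `f` is maximal. -/
def scanBest : List ι → ι → ι
  | [], b => b
  | a :: l, b => scanBest l (if f b < f a then a else b)

lemma le_scanBest (l : List ι) {b j : ι} (hj : j ∈ b :: l) : f j ≤ f (scanBest f l b) := by
  induction l generalizing b j with
  | nil => simp_all [scanBest]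
  | cons a l ih =>
    have hb : f b ≤ f (if f b < f a then a else b) := by split_ifs <;> omega
    have ha : f a ≤ f (if f b < f a then a else b) := by split_ifs <;> omega
    simp only [scanBest]
    rcases List.mem_cons.mp hj with rfl | hj
    · exact hb.trans (ih List.mem_cons_self)
    rcases List.mem_cons.mp hj with rfl | hj
    · exact ha.trans (ih List.mem_cons_self)
    · exact ih (List.mem_cons_of_mem _ hj)

/-- Invariant of the scans for `f` and for `f' ≤ f` run side by side: they can only diverge at an
element whose value strictly dropped. -/
def ScanRel (b b' : ι) : Prop :=
  b' = b ∨ (f' b < f b ∧ f b' ≤ f b ∧ f' b ≤ f' b')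

variable {f f'}

lemma scanRel_scanBest (hle : ∀ j, f' j ≤ f j) (l : List ι) {b b' : ι}
    (h : ScanRel f f' b b') : ScanRel f f' (scanBest f l b) (scanBest f' l b') := by
  induction l generalizing b b' with
  | nil => exact h
  | cons a l ih =>
    apply ih
    have := hle a; have := hle b; have := hle b'
    unfold ScanRel at h ⊢
    rcases h with rfl | ⟨h₁, h₂, h₃⟩ <;> split_ifs <;>
      first | exact Or.inl rfl | exact Or.inr ⟨by omega, by omega, by omega⟩

lemma scanBest_eq_of_le (hle : ∀ j, f' j ≤ f j) (l : List ι) (b : ι)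
    (heq : f' (scanBest f l b) = f (scanBest f l b)) : scanBest f' l b = scanBest f l b := by
  rcases scanRel_scanBest hle l (Or.inl rfl : ScanRel f f' b b) with h | h
  · exact h
  · omega

end ScanBest

section Greedy

variable {α : Type*} [DecidableEq α] {m : ℕ}

lemma bestIdx_eq_scanBest (S : Fin m → Finset α) (U : Finset α) (l : List (Fin m)) (b : Fin m) :
    bestIdx S U l b = scanBest (fun j => #(S j ∩ U)) l b := by
  induction l generalizing b with
  | nil => rfl
  | cons a l ih => simp only [bestIdx, scanBest, ih]

lemma greedyList_nil (S : Fin m → Finset α) (U : Finset α) : greedyList S [] U = [] := by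
  rw [greedyList]

lemma greedyList_cons (S : Fin m → Finset α) {U : Finset α} {b w : Fin m} {l : List (Fin m)}
    (hw : bestIdx S U l b = w) :
    greedyList S (b :: l) U =
      if (S w ∩ U).Nonempty then w :: greedyList S (b :: l) (U \ S w) else [] := by
  rw [greedyList, hw, dite_eq_ite]

lemma Finset.sdiff_ssubset_of_inter_nonempty {s U : Finset α} (h : (s ∩ U).Nonempty) : U \ s ⊂ U := by
  obtain ⟨x, hx⟩ := h
  rw [mem_inter] at hx
  exact (ssubset_iff_of_subset sdiff_subset).mpr ⟨x, hx.2, fun hx' => (mem_sdiff.mp hx').2 hx.1⟩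

lemma Finset.inter_sdiff_eq_sdiff_inter (s t U : Finset α) : s ∩ (U \ t) = (s ∩ U) \ (t ∩ U) := by
  ext x; simp only [mem_inter, mem_sdiff]; tauto

lemma greedyList_congr (S S' : Fin m → Finset α) (order : List (Fin m)) {U U' : Finset α}
    (h : ∀ j, S j ∩ U = S' j ∩ U') : greedyList S order U = greedyList S' order U' := by
  induction U using Finset.strongInduction generalizing U' with
  | _ U ih =>
    rcases order with _ | ⟨b, l⟩
    · rw [greedyList_nil, greedyList_nil]
    have hw : bestIdx S' U' l b = bestIdx S U l b := by
      simp only [bestIdx_eq_scanBest, h]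
    rw [greedyList_cons S rfl, greedyList_cons S' hw, h]
    split_ifs with hne
    · refine congrArg _ (ih _ (sdiff_ssubset_of_inter_nonempty (h _ ▸ hne)) fun j => ?_)
      rw [inter_sdiff_eq_sdiff_inter, inter_sdiff_eq_sdiff_inter, h, h]
    · rfl

lemma greedyList_eq_of_subset {S : Fin m → Finset α} (order : List (Fin m)) {U U' : Finset α}
    (hU : ∀ j, S j ⊆ U) (hU' : ∀ j, S j ⊆ U') : greedyList S order U = greedyList S order U' :=
  greedyList_congr S S order fun j => by rw [inter_eq_left.mpr (hU j), inter_eq_left.mpr (hU' j)]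

lemma inter_nonempty_of_mem_greedyList (S : Fin m → Finset α) (order : List (Fin m))
    {U : Finset α} {i : Fin m} (hi : i ∈ greedyList S order U) : (S i ∩ U).Nonempty := by
  induction U using Finset.strongInduction with
  | _ U ih =>
    rcases order with _ | ⟨b, l⟩
    · simp [greedyList_nil] at hi
    rw [greedyList_cons S rfl] at hi
    split_ifs at hi with hne
    · rcases List.mem_cons.mp hi with rfl | hi
      · exact hne
      · exact (ih _ (sdiff_ssubset_of_inter_nonempty hne) hi).mono
          (inter_subset_inter_left sdiff_subset)
    · simp at hi

lemma exists_mem_greedyList_of_mem (S : Fin m → Finset α) {order : List (Fin m)} {U : Finset α}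
    {j : Fin m} (hj : j ∈ order) {x : α} (hxj : x ∈ S j) (hxU : x ∈ U) :
    ∃ k ∈ greedyList S order U, x ∈ S k := by
  induction U using Finset.strongInduction with
  | _ U ih =>
    rcases order with _ | ⟨b, l⟩
    · simp at hj
    rw [greedyList_cons S rfl]
    set w := bestIdx S U l b with hw
    split_ifs with hne
    · by_cases hxw : x ∈ S w
      · exact ⟨w, List.mem_cons_self, hxw⟩
      · obtain ⟨k, hk, hxk⟩ :=
          ih _ (sdiff_ssubset_of_inter_nonempty hne) (mem_sdiff.mpr ⟨hxU, hxw⟩)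
        exact ⟨k, List.mem_cons_of_mem _ hk, hxk⟩
    · have hmax : #(S j ∩ U) ≤ #(S w ∩ U) := by
        rw [hw, bestIdx_eq_scanBest]
        exact le_scanBest (fun k => #(S k ∩ U)) l hj
      rw [not_nonempty_iff_eq_empty.mp hne, card_empty, Nat.le_zero, card_eq_zero] at hmax
      exact absurd (mem_inter.mpr ⟨hxj, hxU⟩) (hmax ▸ notMem_empty x)

lemma ne_of_mem_greedyList_sdiff (S : Fin m → Finset α) (order : List (Fin m)) {U : Finset α}
    {i w : Fin m} (hi : i ∈ greedyList S order (U \ S w)) : i ≠ w := by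
  rintro rfl
  obtain ⟨x, hx⟩ := inter_nonempty_of_mem_greedyList S order hi
  simp at hx

lemma greedyList_update_of_ne (S : Fin m → Finset α) {U : Finset α} {b w : Fin m}
    {l : List (Fin m)} (hw : bestIdx S U l b = w) {i : Fin m} {T : Finset α} (hT : T ⊆ S i)
    (hi : i ≠ w) (hne : (S w ∩ U).Nonempty) :
    greedyList (update S i T) (b :: l) U =
      w :: greedyList (update S i T) (b :: l) (U \ S w) := by
  have hSw : update S i T w = S w := update_of_ne hi.symm _ _
  have hbest : bestIdx (update S i T) U l b = w := by
    subst hw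
    simp only [bestIdx_eq_scanBest] at hSw ⊢
    refine scanBest_eq_of_le (fun j => card_le_card (inter_subset_inter_right ?_)) l b
      (by rw [hSw])
    rcases eq_or_ne j i with rfl | hj
    · simpa using hT
    · simp [update_of_ne hj]
  rw [greedyList_cons _ hbest, hSw, if_pos hne]

/-- The marginals `M i` are the elements newly covered by agent `i` when it is picked. -/
theorem exists_greedy_marginals (S : Fin m → Finset α) (order : List (Fin m)) (U : Finset α) :
    ∃ M : Fin m → Finset α,
      (∀ i ∈ greedyList S order U,
        M i ⊆ S i ∩ U ∧ i ∈ greedyList (update S i (M i)) order U) ∧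
      ∀ i ∈ greedyList S order U, ∀ j ∈ greedyList S order U, i ≠ j → Disjoint (M i) (M j) := by
  induction U using Finset.strongInduction with
  | _ U ih =>
    rcases order with _ | ⟨b, l⟩
    · exact ⟨S, by simp [greedyList_nil]⟩
    obtain ⟨w, hw⟩ : ∃ w, bestIdx S U l b = w := ⟨_, rfl⟩
    by_cases hne : (S w ∩ U).Nonempty
    swap
    · exact ⟨S, by simp [greedyList_cons S hw, hne]⟩
    obtain ⟨M, hM, hdisj⟩ := ih _ (sdiff_ssubset_of_inter_nonempty hne)
    have hrun : greedyList S (b :: l) U = w :: greedyList S (b :: l) (U \ S w) := by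
      rw [greedyList_cons S hw, if_pos hne]
    have hMw : ∀ i ∈ greedyList S (b :: l) (U \ S w), Disjoint (S w ∩ U) (M i) := fun i hi =>
      disjoint_of_subset_right ((hM i hi).1.trans inter_subset_right)
        (disjoint_of_subset_left inter_subset_left disjoint_sdiff)
    have hMi : ∀ i ∈ greedyList S (b :: l) (U \ S w), update M w (S w ∩ U) i = M i :=
      fun i hi => update_of_ne (ne_of_mem_greedyList_sdiff S _ hi) _ _
    refine ⟨update M w (S w ∩ U), ?_, ?_⟩
    all_goals simp only [hrun, List.mem_cons]
    · rintro i (hiw | hi)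
      · rw [hiw, update_self]
        refine ⟨subset_rfl, ?_⟩
        rw [greedyList_congr _ S _ fun j => ?_, hrun]
        · exact List.mem_cons_self
        · rcases eq_or_ne j w with rfl | hj <;> simp [*]
      · have hiw := ne_of_mem_greedyList_sdiff S _ hi
        rw [hMi i hi]
        refine ⟨(hM i hi).1.trans (inter_subset_inter_left sdiff_subset), ?_⟩
        rw [greedyList_update_of_ne S hw ((hM i hi).1.trans inter_subset_left) hiw hne]
        exact List.mem_cons_of_mem _ (hM i hi).2
    · rintro i (hiw | hi) j (hjw | hj) hij
      · exact absurd (hiw.trans hjw.symm) hij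
      · simpa [hiw, hMi j hj] using hMw j hj
      · simpa [hjw, hMi i hi] using (hMw i hi).symm
      · simpa [hMi i hi, hMi j hj] using hdisj i hi j hj hij

lemma subset_unionSet (S : Fin m → Finset α) (j : Fin m) : S j ⊆ unionSet S :=
  subset_biUnion_of_mem S (mem_univ j)

lemma coverD_update_of_subset {S : Fin m → Finset α} {i : Fin m} {T : Finset α} (hT : T ⊆ S i) :
    coverD (update S i T) =
      (greedyList (update S i T) (List.finRange m) (unionSet S)).toFinset := by
  refine congrArg _ (greedyList_eq_of_subset _ (subset_unionSet _) fun j => ?_)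
  rcases eq_or_ne j i with rfl | hj
  · simpa using hT.trans (subset_unionSet S j)
  · simpa [update_of_ne hj] using subset_unionSet S j

namespace IsNashD

variable {beta alpha : ℝ} {S : Fin m → Finset α} (hN : IsNashD beta alpha S) (halpha : 0 < alpha)
include hN halpha

lemma mem_coverD {i : Fin m} (hi : (S i).Nonempty) : i ∈ coverD S := by
  by_contra hni
  have hdrop : i ∉ coverD (update S i ∅) := fun hc => by
    simpa using inter_nonempty_of_mem_greedyList _ _ (List.mem_toFinset.mp hc)
  have hdev := hN i ∅
  have hcard : (0 : ℝ) < #(S i) := by exact_mod_cast hi.card_pos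
  simp only [utilD, if_neg hdrop, if_neg hni, update_self, card_empty, Nat.cast_zero, mul_zero,
    zero_sub] at hdev
  nlinarith

lemma card_le_of_mem_coverD_update {i : Fin m} {T : Finset α} (hi : i ∈ coverD S)
    (hT : i ∈ coverD (update S i T)) : #(S i) ≤ #T := by
  have hdev := hN i T
  simp only [utilD, if_pos hi, if_pos hT, update_self] at hdev
  exact_mod_cast (le_of_mul_le_mul_left (by linarith) halpha : (#(S i) : ℝ) ≤ #T)

theorem pairwise_disjoint : Pairwise (Disjoint on S) := by
  obtain ⟨M, hM, hdisj⟩ := exists_greedy_marginals S (List.finRange m) (unionSet S)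
  have hmarg : ∀ i, (S i).Nonempty →
      i ∈ greedyList S (List.finRange m) (unionSet S) ∧ S i = M i := by
    intro i hi
    have hcov : i ∈ greedyList S (List.finRange m) (unionSet S) :=
      List.mem_toFinset.mp (hN.mem_coverD halpha hi)
    have hMi : M i ⊆ S i := (hM i hcov).1.trans inter_subset_left
    have hdev : #(S i) ≤ #(M i) := hN.card_le_of_mem_coverD_update halpha (hN.mem_coverD halpha hi)
      (by rw [coverD_update_of_subset hMi]; exact List.mem_toFinset.mpr (hM i hcov).2)
    exact ⟨hcov, (eq_of_subset_of_card_le hMi hdev).symm⟩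
  intro i j hij
  show Disjoint (S i) (S j)
  rcases (S i).eq_empty_or_nonempty with hi | hi
  · exact hi ▸ disjoint_empty_left _
  rcases (S j).eq_empty_or_nonempty with hj | hj
  · exact hj ▸ disjoint_empty_right _
  obtain ⟨hi, hSi⟩ := hmarg i hi
  obtain ⟨hj, hSj⟩ := hmarg j hj
  exact hSi ▸ hSj ▸ hdisj i hi j hj hij

theorem card_le_one (i : Fin m) : #(S i) ≤ 1 := by
  rcases (S i).eq_empty_or_nonempty with hi | ⟨x, hx⟩
  · simp [hi]
  have hxi : x ∈ update S i {x} i := by simp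
  obtain ⟨k, hk, hxk⟩ := exists_mem_greedyList_of_mem (update S i {x})
    (List.mem_finRange i) hxi (mem_biUnion.mpr ⟨i, mem_univ i, hxi⟩)
  obtain rfl : k = i := by
    by_contra hki
    rw [update_of_ne hki] at hxk
    exact disjoint_left.mp (hN.pairwise_disjoint halpha hki) hxk hx
  simpa using hN.card_le_of_mem_coverD_update halpha (hN.mem_coverD halpha ⟨x, hx⟩)
    (List.mem_toFinset.mpr hk)

end IsNashD

end Greedy

theorem scigD_nash_structure_general {α : Type*} [Fintype α] [DecidableEq α] {m : ℕ}
    (beta alpha : ℝ) (halpha : 0 < alpha)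
    (S : Fin m → Finset α) (hN : IsNashD beta alpha S) :
    (∀ i j : Fin m, i ≠ j → Disjoint (S i) (S j)) ∧
      (∀ i : Fin m, (S i).card ≤ 1) ∧
      (Finset.univ.filter (fun i : Fin m => S i ≠ ∅)).card ≤ min m (Fintype.card α) := by
  have hdisj := hN.pairwise_disjoint halpha
  refine ⟨fun i j hij => hdisj hij, hN.card_le_one halpha, le_min ?_ ?_⟩
  · simpa using card_filter_le univ fun i => S i ≠ ∅
  · calc #{i | S i ≠ ∅} ≤ #(({i | S i ≠ ∅} : Finset (Fin m)).biUnion S) :=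
          card_le_card_biUnion (hdisj.set_pairwise _) fun i hi =>
            nonempty_iff_ne_empty.mpr (mem_filter.mp hi).2
      _ ≤ Fintype.card α := card_le_univ _

/-- With the deterministic greedy algorithm, in any pure Nash
equilibrium strategies are pairwise disjoint and of cardinality at most one;
consequently at most min{m,n} agents have nonempty strategies. -/
theorem scigD_nash_structure {α : Type*} [Fintype α] [DecidableEq α] {m : ℕ}
    (beta alpha : ℝ) (hbeta : 0 < beta) (halpha : 0 < alpha)
    (S : Fin m → Finset α) (hN : IsNashD beta alpha S) :
    (∀ i j : Fin m, i ≠ j → Disjoint (S i) (S j)) ∧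
      (∀ i : Fin m, (S i).card ≤ 1) ∧
      (Finset.univ.filter (fun i : Fin m => S i ≠ ∅)).card ≤ min m (Fintype.card α) :=
  scigD_nash_structure_general beta alpha halpha S hN
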